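/- Let θ ∈ ℝ^k be a vector of angles with ‖θ‖_∞ ≤ π/4. Define d_A = ‖θ‖_2, d_F = ‖sin θ‖_2 (i.e., the ℓ² norm of the vector with entries sin θ_i), and r = (∑_i ((1 - sin² θ_i)^{-1} - 1))^{1/2} = (∑_i tan² θ_i)^{1/2}. Then (π/2)·r ≥ (π/2)·d_F ≥ d_A ≥ (1/√2)·r. -/

import Mathlib

/-!
Each of the three inequalities holds termwise for a single angle `x` with `|x| ≤ π/4`:
`sin² x ≤ tan² x` because `cos² x ≤ 1`; `x² ≤ (π/2)² sin² x` is Jordan's inequality;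
and `tan² x ≤ 2 x²` follows from `|sin x| ≤ |x|` and `cos² x ≥ 1/2`.
Summing and taking square roots gives the inequalities between the `ℓ²` norms.
-/

open Real Finset

lemma Real.sqrt_sum_sq_le_sqrt_mul {ι : Type*} (s : Finset ι) {f g : ι → ℝ} {c : ℝ}
    (h : ∀ i ∈ s, f i ^ 2 ≤ c * g i ^ 2) :
    √(∑ i ∈ s, f i ^ 2) ≤ √c * √(∑ i ∈ s, g i ^ 2) := by
  rw [← sqrt_mul' c (by positivity), mul_sum]
  exact sqrt_le_sqrt (sum_le_sum h)

lemma Real.sin_sq_le_tan_sq {x : ℝ} (hx : cos x ≠ 0) : sin x ^ 2 ≤ tan x ^ 2 := by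
  rw [tan_eq_sin_div_cos, div_pow]
  exact le_div_self (sq_nonneg _) (by positivity) (by nlinarith [cos_sq_le_one x])

lemma Real.sq_le_pi_div_two_sq_mul_sin_sq {x : ℝ} (hx : |x| ≤ π / 2) :
    x ^ 2 ≤ (π / 2) ^ 2 * sin x ^ 2 := by
  have jordan : (2 / π * |x|) ^ 2 ≤ |sin x| ^ 2 := by
    gcongr
    exact mul_abs_le_abs_sin hx
  rw [mul_pow, sq_abs, sq_abs] at jordan
  calc x ^ 2 = (π / 2) ^ 2 * ((2 / π) ^ 2 * x ^ 2) := by field_simp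
    _ ≤ (π / 2) ^ 2 * sin x ^ 2 := by gcongr

lemma Real.tan_sq_le_two_mul_sq {x : ℝ} (hx : |x| ≤ π / 4) : tan x ^ 2 ≤ 2 * x ^ 2 := by
  obtain ⟨hx₁, hx₂⟩ := abs_le.1 hx
  have hcos_sq : 1 / 2 ≤ cos x ^ 2 := by
    rw [cos_sq]
    have : 0 ≤ cos (2 * x) := cos_nonneg_of_mem_Icc ⟨by linarith, by linarith⟩
    linarith
  have hsin_sq : sin x ^ 2 ≤ x ^ 2 := by
    exact sq_le_sq.2 abs_sin_le_abs
  rw [tan_eq_sin_div_cos, div_pow, div_le_iff₀ (by linarith)]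
  nlinarith [sq_nonneg x]

/-- Equivalence of the arc-length distance, projected Frobenius distance, and the
inverse-retraction norm, in terms of the vector of principal angles `θ` with
`‖θ‖_∞ ≤ π/4`. -/
theorem stmt2 (k : ℕ) (θ : Fin k → ℝ) (hθ : ∀ i, |θ i| ≤ Real.pi / 4) :
    (Real.pi / 2) * Real.sqrt (∑ i, Real.sin (θ i) ^ 2) ≤
        (Real.pi / 2) * Real.sqrt (∑ i, Real.tan (θ i) ^ 2) ∧
    Real.sqrt (∑ i, (θ i) ^ 2) ≤ (Real.pi / 2) * Real.sqrt (∑ i, Real.sin (θ i) ^ 2) ∧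
    (1 / Real.sqrt 2) * Real.sqrt (∑ i, Real.tan (θ i) ^ 2) ≤ Real.sqrt (∑ i, (θ i) ^ 2) := by
  have hθ' : ∀ i, |θ i| < π / 2 := fun i => (hθ i).trans_lt (by linarith [pi_pos])
  refine ⟨?_, ?_, ?_⟩
  · gcongr _ * √(∑ i, ?_) with i
    exact sin_sq_le_tan_sq (cos_pos_of_mem_Ioo (abs_lt.1 (hθ' i))).ne'
  · have h := sqrt_sum_sq_le_sqrt_mul univ fun i _ =>
      sq_le_pi_div_two_sq_mul_sin_sq (hθ' i).le
    rwa [sqrt_sq (by positivity)] at h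
  · rw [one_div, inv_mul_le_iff₀ (by positivity)]
    exact sqrt_sum_sq_le_sqrt_mul univ fun i _ => tan_sq_le_two_mul_sq (hθ i)
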